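/- Suppose H = [[A, B],[C, -A*]] is a Hamiltonian operator matrix with D(H) = D(A) × D(A*) (so D(A) ⊆ D(C) and D(A*) ⊆ D(B)) and ρ(A) ≠ ∅. If for some λ ∈ ρ(A) the triangular factorization identity (A + λ̄ + B(A* - λ̄)⁻¹C)* = A* + λ + C(A - λ)⁻¹B holds, then JH = (JH)*, i.e., H is symplectic self-adjoint. -/

import Mathlib

open LinearPMap

variable {X : Type*} [NormedAddCommGroup X] [InnerProductSpace ℂ X] [CompleteSpace X]

/-- The product Hilbert space `X × X` (with the ℓ² norm, so that it is again a Hilbert space). -/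
abbrev ProdX (X : Type*) [NormedAddCommGroup X] [InnerProductSpace ℂ X] := WithLp 2 (X × X)

/-- The unit symplectic operator `J = [[0, I], [-I, 0]]`, `J(x, y) = (y, -x)`. -/
noncomputable def symplJ (X : Type*) [NormedAddCommGroup X] [InnerProductSpace ℂ X] :
    ProdX X →ₗ[ℂ] ProdX X :=
  ((WithLp.linearEquiv 2 ℂ (X × X)).symm.toLinearMap.comp
      ((LinearMap.snd ℂ X X).prod (-LinearMap.fst ℂ X X))).comp
    (WithLp.linearEquiv 2 ℂ (X × X)).toLinearMap

/-- `H` is the Hamiltonian block operator matrix `[[A, B], [C, -A*]]` with its natural domain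
`(D(A) ∩ D(C)) × (D(B) ∩ D(A*))`. -/
def IsHamiltonianMatrix (A B C : X →ₗ.[ℂ] X) (H : ProdX X →ₗ.[ℂ] ProdX X) : Prop :=
  H.domain = ((A.domain ⊓ C.domain).prod (B.domain ⊓ A.adjoint.domain)).comap
      (WithLp.linearEquiv 2 ℂ (X × X)).toLinearMap ∧
  ∀ (u : H.domain) (h₁ : (WithLp.equiv 2 (X × X) (u : ProdX X)).1 ∈ A.domain) (h₂ : (WithLp.equiv 2 (X × X) (u : ProdX X)).1 ∈ C.domain)
      (h₃ : (WithLp.equiv 2 (X × X) (u : ProdX X)).2 ∈ B.domain) (h₄ : (WithLp.equiv 2 (X × X) (u : ProdX X)).2 ∈ A.adjoint.domain),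
    WithLp.equiv 2 (X × X) (H u) =
      (A ⟨(WithLp.equiv 2 (X × X) (u : ProdX X)).1, h₁⟩ + B ⟨(WithLp.equiv 2 (X × X) (u : ProdX X)).2, h₃⟩,
       C ⟨(WithLp.equiv 2 (X × X) (u : ProdX X)).1, h₂⟩ - A.adjoint ⟨(WithLp.equiv 2 (X × X) (u : ProdX X)).2, h₄⟩)


/-- `R` is the (bounded, everywhere defined) resolvent of `T` at `λ`, i.e. `R = (T - λ)⁻¹`;
its existence means `λ ∈ ρ(T)`. -/
def IsResolventAt {X : Type*} [NormedAddCommGroup X] [InnerProductSpace ℂ X]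
    (T : X →ₗ.[ℂ] X) (l : ℂ) (R : X →L[ℂ] X) : Prop :=
  (∀ y : X, ∃ h : R y ∈ T.domain, T ⟨R y, h⟩ - l • R y = y) ∧
    ∀ x : T.domain, R (T x - l • (x : X)) = x

section Auxiliary

open Filter Topology

local notation "⟪" x ", " y "⟫" => @inner ℂ _ _ x y

/-- **von Neumann**: for a closed densely defined operator `A` on a Hilbert space, any pair
`(u, w)` that is formally adjoint to `A†` belongs to the graph of `A` (i.e. `A†† = A`). -/
theorem aux_mem_graph_of_inner_adjoint (A : X →ₗ.[ℂ] X) (hA : A.IsClosed)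
    (hAd : Dense (A.domain : Set X)) (u w : X)
    (h : ∀ y : A.adjoint.domain, ⟪(A.adjoint y : X), u⟫ = ⟪(y : X), w⟫) :
    ∃ hu : u ∈ A.domain, A ⟨u, hu⟩ = w := by
  set e := WithLp.linearEquiv 2 ℂ (X × X) with he
  set G : Submodule ℂ (WithLp 2 (X × X)) := A.graph.comap e.toLinearMap with hG
  have hGc : IsClosed (G : Set (WithLp 2 (X × X))) := by
    have : (G : Set (WithLp 2 (X × X))) =
        (WithLp.prodContinuousLinearEquiv 2 ℂ X X) ⁻¹' (A.graph : Set (X × X)) := rfl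
    rw [this]
    exact hA.preimage (WithLp.prodContinuousLinearEquiv 2 ℂ X X).continuous
  have hmem : e.symm (u, w) ∈ Gᗮᗮ := by
    rw [Submodule.mem_orthogonal]
    intro t ht
    rw [Submodule.mem_orthogonal] at ht
    have hkey : ∀ x : A.domain, ⟪(x : X), t.fst⟫ + ⟪A x, t.snd⟫ = 0 := by
      intro x
      have := ht (e.symm ((x : X), A x)) (by
        simp only [hG, Submodule.mem_comap]
        exact A.mem_graph x)
      rwa [WithLp.prod_inner_apply] at this
    have hadj : ∀ x : A.domain, ⟪-t.fst, (x : X)⟫ = ⟪t.snd, A x⟫ := by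
      intro x
      have h1 := congrArg (starRingEnd ℂ) (hkey x)
      rw [_root_.map_add, inner_conj_symm, inner_conj_symm, RingHom.map_zero] at h1
      rw [inner_neg_left]
      linear_combination -h1
    have ht2 : t.snd ∈ A.adjoint.domain :=
      mem_adjoint_domain_of_exists _ ⟨-t.fst, hadj⟩
    have hval : A.adjoint ⟨t.snd, ht2⟩ = -t.fst := adjoint_apply_eq hAd _ hadj
    rw [WithLp.prod_inner_apply]
    have h2 := h ⟨t.snd, ht2⟩
    rw [hval, inner_neg_left] at h2
    change ⟪t.fst, u⟫ + ⟪t.snd, w⟫ = 0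
    linear_combination -h2
  rw [Submodule.orthogonal_orthogonal_eq_closure, hGc.submodule_topologicalClosure_eq] at hmem
  rw [hG, Submodule.mem_comap] at hmem
  rw [A.mem_graph_iff] at hmem
  obtain ⟨y, hy1, hy2⟩ := hmem
  simp only [LinearEquiv.coe_coe, LinearEquiv.apply_symm_apply] at hy1 hy2
  have hu : u ∈ A.domain := hy1 ▸ y.2
  refine ⟨hu, ?_⟩
  have hyy : (⟨u, hu⟩ : A.domain) = y := Subtype.ext hy1.symm
  rw [hyy, hy2]

/-- Closed graph theorem: composing a closed operator with a bounded operator mapping into its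
domain yields a bounded operator. -/
theorem aux_exists_clm_comp (C : X →ₗ.[ℂ] X) (hC : C.IsClosed) (RA : X →L[ℂ] X)
    (hmem : ∀ s, RA s ∈ C.domain) :
    ∃ F : X →L[ℂ] X, ∀ s, F s = C ⟨RA s, hmem s⟩ := by
  let L : X →ₗ[ℂ] X :=
    { toFun := fun s => C ⟨RA s, hmem s⟩
      map_add' := fun s t => by
        have h : (⟨RA (s + t), hmem _⟩ : C.domain) = ⟨RA s, hmem s⟩ + ⟨RA t, hmem t⟩ :=
          Subtype.ext (by simp)
        show C ⟨RA (s + t), hmem _⟩ = C ⟨RA s, hmem s⟩ + C ⟨RA t, hmem t⟩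
        rw [h, C.map_add]
      map_smul' := fun c s => by
        have h : (⟨RA (c • s), hmem _⟩ : C.domain) = c • (⟨RA s, hmem s⟩ : C.domain) :=
          Subtype.ext (by simp)
        show C ⟨RA (c • s), hmem _⟩ = (RingHom.id ℂ) c • C ⟨RA s, hmem s⟩
        rw [h, C.map_smul, RingHom.id_apply] }
  have hcont : Continuous L := by
    apply L.continuous_of_seq_closed_graph
    intro u x y hux huy
    have h1 : Tendsto (fun n => RA (u n)) atTop (𝓝 (RA x)) :=
      (RA.continuous.tendsto x).comp hux
    have h2 : Tendsto (fun n => ((RA (u n), L (u n)) : X × X)) atTop (𝓝 (RA x, y)) :=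
      h1.prodMk_nhds huy
    have hg : (RA x, y) ∈ C.graph :=
      hC.mem_of_tendsto h2 (Eventually.of_forall fun n => C.mem_graph ⟨RA (u n), hmem _⟩)
    rw [C.mem_graph_iff] at hg
    obtain ⟨z, hz1, hz2⟩ := hg
    have hzz : (⟨RA x, hmem x⟩ : C.domain) = z := Subtype.ext hz1.symm
    show y = C ⟨RA x, hmem x⟩
    rw [hzz, hz2]
  exact ⟨⟨L, hcont⟩, fun s => rfl⟩

/-- A self-adjoint operator is symmetric. -/
theorem aux_symm_of_adjoint_eq (B : X →ₗ.[ℂ] X) (hBd : Dense (B.domain : Set X))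
    (hBsa : B.adjoint = B) (a b : B.domain) : ⟪B a, (b : X)⟫ = ⟪(a : X), B b⟫ := by
  have h := adjoint_isFormalAdjoint hBd (T := B)
  rw [hBsa] at h
  exact h a b

end Auxiliary

section MainProof

local notation "⟪" x ", " y "⟫" => @inner ℂ _ _ x y

/-- Let `H = [[A, B], [C, -A*]]` be a Hamiltonian operator matrix with
`D(H) = D(A) × D(A*)` and `λ ∈ ρ(A)`. If the Schur complement identity
`(A + λ̄ + B(A* - λ̄)⁻¹C)* = A* + λ + C(A - λ)⁻¹B` holds, then `JH = (JH)*`. -/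
theorem symplectic_selfAdjoint_of_schur_adjoint_identity
    {X : Type*} [NormedAddCommGroup X] [InnerProductSpace ℂ X] [CompleteSpace X]
    (A B C : X →ₗ.[ℂ] X) (H : ProdX X →ₗ.[ℂ] ProdX X)
    (hA : A.IsClosed) (hB : B.IsClosed) (hC : C.IsClosed)
    (hAd : Dense (A.domain : Set X)) (hBd : Dense (B.domain : Set X))
    (hCd : Dense (C.domain : Set X))
    (hBsa : B.adjoint = B) (hCsa : C.adjoint = C)
    (hH : IsHamiltonianMatrix A B C H) (hHd : Dense (H.domain : Set (ProdX X)))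
    (hAC : A.domain ≤ C.domain) (hAB : A.adjoint.domain ≤ B.domain)
    (l : ℂ) (RA RAs : X →L[ℂ] X)
    (hRA : IsResolventAt A l RA) (hRAs : IsResolventAt A.adjoint (starRingEnd ℂ l) RAs)
    (S1 S2 : X →ₗ.[ℂ] X)
    (hS1dom : S1.domain = A.domain)
    (hS1 : ∀ (x : S1.domain) (hxA : (x : X) ∈ A.domain) (hxC : (x : X) ∈ C.domain)
        (hxB : RAs (C ⟨(x : X), hxC⟩) ∈ B.domain),
      S1 x = A ⟨(x : X), hxA⟩ + starRingEnd ℂ l • (x : X) +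
        B ⟨RAs (C ⟨(x : X), hxC⟩), hxB⟩)
    (hS2dom : S2.domain = A.adjoint.domain)
    (hS2 : ∀ (y : S2.domain) (hyA : (y : X) ∈ A.adjoint.domain) (hyB : (y : X) ∈ B.domain)
        (hyC : RA (B ⟨(y : X), hyB⟩) ∈ C.domain),
      S2 y = A.adjoint ⟨(y : X), hyA⟩ + l • (y : X) + C ⟨RA (B ⟨(y : X), hyB⟩), hyC⟩)
    (hSchur : S1.adjoint = S2) :
    ((symplJ X).compPMap H).adjoint = (symplJ X).compPMap H := by
  classical
  set T := (symplJ X).compPMap H with hT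
  -- domain of H
  have hdom : ∀ z : ProdX X, z ∈ H.domain ↔ z.fst ∈ A.domain ∧ z.snd ∈ A.adjoint.domain := by
    intro z
    rw [hH.1]
    exact ⟨fun h => ⟨h.1.1, h.2.2⟩, fun h => ⟨⟨h.1, hAC h.1⟩, hAB h.2, h.2⟩⟩
  -- resolvent facts
  have hRAmem : ∀ s, RA s ∈ A.domain := fun s => (hRA.1 s).choose
  have hRAeq : ∀ s, (A ⟨RA s, hRAmem s⟩ : X) - l • RA s = s := fun s => (hRA.1 s).choose_spec
  have hRAsmem : ∀ s, RAs s ∈ A.adjoint.domain := fun s => (hRAs.1 s).choose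
  have hRAseq : ∀ s, (A.adjoint ⟨RAs s, hRAsmem s⟩ : X) - (starRingEnd ℂ) l • RAs s = s :=
    fun s => (hRAs.1 s).choose_spec
  -- symmetry facts
  have hAfa : ∀ (g : A.adjoint.domain) (x : A.domain),
      ⟪(A.adjoint g : X), (x : X)⟫ = ⟪(g : X), (A x : X)⟫ := adjoint_isFormalAdjoint hAd
  have hBsym := aux_symm_of_adjoint_eq B hBd hBsa
  have hCsym := aux_symm_of_adjoint_eq C hCd hCsa
  -- the bounded operator `F = C (A - λ)⁻¹`
  obtain ⟨F, hF⟩ := aux_exists_clm_comp C hC RA (fun s => hAC (hRAmem s))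
  -- the key identity `⟪w₀, (A* - λ̄)⁻¹ C x⟫ = ⟪F w₀, x⟫` for `x ∈ D(A)`
  have hkeyF : ∀ (w₀ x : X) (hx : x ∈ A.domain),
      ⟪w₀, RAs (C ⟨x, hAC hx⟩)⟫ = ⟪F w₀, x⟫ := by
    intro w₀ x hx
    have hr := hRAmem w₀
    have hg := hRAsmem (C ⟨x, hAC hx⟩)
    have hadjval : (A.adjoint ⟨RAs (C ⟨x, hAC hx⟩), hg⟩ : X) =
        (C ⟨x, hAC hx⟩ : X) + (starRingEnd ℂ) l • RAs (C ⟨x, hAC hx⟩) :=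
      sub_eq_iff_eq_add.mp (hRAseq _)
    have h1 : ⟪(A ⟨RA w₀, hr⟩ : X), RAs (C ⟨x, hAC hx⟩)⟫ =
        ⟪RA w₀, (A.adjoint ⟨RAs (C ⟨x, hAC hx⟩), hg⟩ : X)⟫ := by
      have h := congrArg (starRingEnd ℂ) (hAfa ⟨RAs (C ⟨x, hAC hx⟩), hg⟩ ⟨RA w₀, hr⟩)
      rw [inner_conj_symm, inner_conj_symm] at h
      exact h.symm
    calc ⟪w₀, RAs (C ⟨x, hAC hx⟩)⟫
        = ⟪(A ⟨RA w₀, hr⟩ : X) - l • RA w₀, RAs (C ⟨x, hAC hx⟩)⟫ := by rw [hRAeq w₀]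
      _ = ⟪(A ⟨RA w₀, hr⟩ : X), RAs (C ⟨x, hAC hx⟩)⟫ -
            (starRingEnd ℂ) l * ⟪RA w₀, RAs (C ⟨x, hAC hx⟩)⟫ := by
          rw [inner_sub_left, inner_smul_left]
      _ = ⟪RA w₀, (C ⟨x, hAC hx⟩ : X) + (starRingEnd ℂ) l • RAs (C ⟨x, hAC hx⟩)⟫ -
            (starRingEnd ℂ) l * ⟪RA w₀, RAs (C ⟨x, hAC hx⟩)⟫ := by rw [h1, hadjval]
      _ = ⟪RA w₀, (C ⟨x, hAC hx⟩ : X)⟫ := by rw [inner_add_right, inner_smul_right]; ring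
      _ = ⟪(C ⟨RA w₀, hAC hr⟩ : X), x⟫ := (hCsym ⟨RA w₀, hAC hr⟩ ⟨x, hAC hx⟩).symm
      _ = ⟪F w₀, x⟫ := by rw [hF w₀]
  -- inner products on the product space
  have hinner : ∀ a b : ProdX X, ⟪a, b⟫ = ⟪a.fst, b.fst⟫ + ⟪a.snd, b.snd⟫ :=
    WithLp.prod_inner_apply
  -- components of `T u`
  have hTapp : ∀ (u : H.domain) (h1 : (u : ProdX X).fst ∈ A.domain)
      (h4 : (u : ProdX X).snd ∈ A.adjoint.domain),
      (T u).fst = (C ⟨(u : ProdX X).fst, hAC h1⟩ : X) - A.adjoint ⟨(u : ProdX X).snd, h4⟩ ∧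
      (T u).snd = -((A ⟨(u : ProdX X).fst, h1⟩ : X) + B ⟨(u : ProdX X).snd, hAB h4⟩) := by
    intro u h1 h4
    have h := hH.2 u h1 (hAC h1) (hAB h4) h4
    exact ⟨congrArg Prod.snd h, congrArg (fun t : X × X => -t.1) h⟩
  -- `T` is symmetric
  have hTfa : T.IsFormalAdjoint T := by
    intro g g'
    obtain ⟨h1, h4⟩ := (hdom g).mp g.2
    obtain ⟨h1', h4'⟩ := (hdom g').mp g'.2
    obtain ⟨hta, htb⟩ := hTapp g h1 h4
    obtain ⟨hta', htb'⟩ := hTapp g' h1' h4'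
    rw [hinner, hinner, hta, htb, hta', htb']
    have e1 : ⟪(C ⟨(g : ProdX X).fst, hAC h1⟩ : X), (g' : ProdX X).fst⟫ =
        ⟪(g : ProdX X).fst, (C ⟨(g' : ProdX X).fst, hAC h1'⟩ : X)⟫ :=
      hCsym ⟨(g : ProdX X).fst, hAC h1⟩ ⟨(g' : ProdX X).fst, hAC h1'⟩
    have e2 : ⟪(A.adjoint ⟨(g : ProdX X).snd, h4⟩ : X), (g' : ProdX X).fst⟫ =
        ⟪(g : ProdX X).snd, (A ⟨(g' : ProdX X).fst, h1'⟩ : X)⟫ :=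
      hAfa ⟨(g : ProdX X).snd, h4⟩ ⟨(g' : ProdX X).fst, h1'⟩
    have e3 : ⟪(A ⟨(g : ProdX X).fst, h1⟩ : X), (g' : ProdX X).snd⟫ =
        ⟪(g : ProdX X).fst, (A.adjoint ⟨(g' : ProdX X).snd, h4'⟩ : X)⟫ := by
      have h := congrArg (starRingEnd ℂ) (hAfa ⟨(g' : ProdX X).snd, h4'⟩ ⟨(g : ProdX X).fst, h1⟩)
      rw [inner_conj_symm, inner_conj_symm] at h
      exact h.symm
    have e4 : ⟪(B ⟨(g : ProdX X).snd, hAB h4⟩ : X), (g' : ProdX X).snd⟫ =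
        ⟪(g : ProdX X).snd, (B ⟨(g' : ProdX X).snd, hAB h4'⟩ : X)⟫ :=
      hBsym ⟨(g : ProdX X).snd, hAB h4⟩ ⟨(g' : ProdX X).snd, hAB h4'⟩
    simp only [inner_sub_left, inner_sub_right, inner_add_left, inner_add_right, inner_neg_left,
      inner_neg_right]
    linear_combination e1 - e2 - e3 - e4
  have le1 : T ≤ T.adjoint :=
    LinearPMap.IsFormalAdjoint.le_adjoint (show Dense (T.domain : Set (ProdX X)) from hHd) hTfa
  -- the reverse inclusion of domains
  have hfa := adjoint_isFormalAdjoint (T := T) (show Dense (T.domain : Set (ProdX X)) from hHd)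
  have hrev : T.adjoint.domain ≤ T.domain := by
    intro z hz
    set w : ProdX X := T.adjoint ⟨z, hz⟩ with hw
    -- zero simplifications
    have hA0 : ∀ h : (0 : X) ∈ A.domain, (A ⟨0, h⟩ : X) = 0 := fun h => by
      rw [show (⟨(0 : X), h⟩ : A.domain) = 0 from rfl, A.map_zero]
    have hAd0 : ∀ h : (0 : X) ∈ A.adjoint.domain, (A.adjoint ⟨0, h⟩ : X) = 0 := fun h => by
      rw [show (⟨(0 : X), h⟩ : A.adjoint.domain) = 0 from rfl, A.adjoint.map_zero]
    have hB0 : ∀ h : (0 : X) ∈ B.domain, (B ⟨0, h⟩ : X) = 0 := fun h => by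
      rw [show (⟨(0 : X), h⟩ : B.domain) = 0 from rfl, B.map_zero]
    have hC0 : ∀ h : (0 : X) ∈ C.domain, (C ⟨0, h⟩ : X) = 0 := fun h => by
      rw [show (⟨(0 : X), h⟩ : C.domain) = 0 from rfl, C.map_zero]
    -- equation (i)
    have hi : ∀ (a : X) (ha : a ∈ A.domain),
        ⟪w.fst, a⟫ = ⟪z.fst, (C ⟨a, hAC ha⟩ : X)⟫ - ⟪z.snd, (A ⟨a, ha⟩ : X)⟫ := by
      intro a ha
      have hgmem : (WithLp.equiv 2 (X × X)).symm (a, (0 : X)) ∈ H.domain :=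
        (hdom _).mpr ⟨ha, A.adjoint.domain.zero_mem⟩
      have h := hfa ⟨z, hz⟩ ⟨(WithLp.equiv 2 (X × X)).symm (a, (0 : X)), hgmem⟩
      obtain ⟨hta, htb⟩ := hTapp ⟨_, hgmem⟩ ha (A.adjoint.domain.zero_mem)
      have hta' : (T ⟨(WithLp.equiv 2 (X × X)).symm (a, (0 : X)), hgmem⟩).fst =
          (C ⟨a, hAC ha⟩ : X) - A.adjoint ⟨0, A.adjoint.domain.zero_mem⟩ := hta
      have htb' : (T ⟨(WithLp.equiv 2 (X × X)).symm (a, (0 : X)), hgmem⟩).snd =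
          -((A ⟨a, ha⟩ : X) + B ⟨0, hAB A.adjoint.domain.zero_mem⟩) := htb
      rw [hAd0, sub_zero] at hta'
      rw [hB0, add_zero] at htb'
      rw [← hw, hinner, hinner, hta', htb'] at h
      rw [show ((⟨(WithLp.equiv 2 (X × X)).symm (a, (0 : X)), hgmem⟩ : T.domain) : ProdX X) =
        (WithLp.equiv 2 (X × X)).symm (a, (0 : X)) from rfl] at h
      rw [show ((⟨z, hz⟩ : T.adjoint.domain) : ProdX X) = z from rfl] at h
      simp only [WithLp.equiv_symm_apply, WithLp.toLp_fst, WithLp.toLp_snd] at h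
      simp only [inner_zero_right, add_zero, inner_neg_right] at h
      linear_combination h
    -- equation (ii)
    have hii : ∀ (b : X) (hb : b ∈ A.adjoint.domain),
        ⟪w.snd, b⟫ = -⟪z.fst, (A.adjoint ⟨b, hb⟩ : X)⟫ - ⟪z.snd, (B ⟨b, hAB hb⟩ : X)⟫ := by
      intro b hb
      have hgmem : (WithLp.equiv 2 (X × X)).symm ((0 : X), b) ∈ H.domain :=
        (hdom _).mpr ⟨A.domain.zero_mem, hb⟩
      have h := hfa ⟨z, hz⟩ ⟨(WithLp.equiv 2 (X × X)).symm ((0 : X), b), hgmem⟩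
      obtain ⟨hta, htb⟩ := hTapp ⟨_, hgmem⟩ (A.domain.zero_mem) hb
      have hta' : (T ⟨(WithLp.equiv 2 (X × X)).symm ((0 : X), b), hgmem⟩).fst =
          (C ⟨0, hAC A.domain.zero_mem⟩ : X) - A.adjoint ⟨b, hb⟩ := hta
      have htb' : (T ⟨(WithLp.equiv 2 (X × X)).symm ((0 : X), b), hgmem⟩).snd =
          -((A ⟨0, A.domain.zero_mem⟩ : X) + B ⟨b, hAB hb⟩) := htb
      rw [hC0, zero_sub] at hta'
      rw [hA0, zero_add] at htb'
      rw [← hw, hinner, hinner, hta', htb'] at h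
      rw [show ((⟨(WithLp.equiv 2 (X × X)).symm ((0 : X), b), hgmem⟩ : T.domain) : ProdX X) =
        (WithLp.equiv 2 (X × X)).symm ((0 : X), b) from rfl] at h
      rw [show ((⟨z, hz⟩ : T.adjoint.domain) : ProdX X) = z from rfl] at h
      simp only [WithLp.equiv_symm_apply, WithLp.toLp_fst, WithLp.toLp_snd] at h
      simp only [inner_zero_right, zero_add, inner_neg_right] at h
      linear_combination h
    -- first: `z.snd ∈ D(S1†) = D(S2) = D(A*)`
    have hv1 : z.snd ∈ S1.adjoint.domain := by
      apply mem_adjoint_domain_of_exists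
      refine ⟨l • z.snd - w.fst - F (w.snd + l • z.fst), fun x => ?_⟩
      have hxA : (x : X) ∈ A.domain := hS1dom ▸ x.2
      have hyB : RAs (C ⟨(x : X), hAC hxA⟩) ∈ B.domain := hAB (hRAsmem _)
      rw [hS1 x hxA (hAC hxA) hyB]
      have hAx := hi (x : X) hxA
      have hymem : RAs (C ⟨(x : X), hAC hxA⟩) ∈ A.adjoint.domain := hRAsmem _
      have hBy := hii (RAs (C ⟨(x : X), hAC hxA⟩)) hymem
      have hadjy : (A.adjoint ⟨RAs (C ⟨(x : X), hAC hxA⟩), hymem⟩ : X) =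
          (C ⟨(x : X), hAC hxA⟩ : X) + (starRingEnd ℂ) l • RAs (C ⟨(x : X), hAC hxA⟩) :=
        sub_eq_iff_eq_add.mp (hRAseq _)
      rw [hadjy, inner_add_right, inner_smul_right] at hBy
      have k1 : ⟪w.snd, RAs (C ⟨(x : X), hAC hxA⟩)⟫ = ⟪F w.snd, (x : X)⟫ := hkeyF _ _ hxA
      have k2 : ⟪z.fst, RAs (C ⟨(x : X), hAC hxA⟩)⟫ = ⟪F z.fst, (x : X)⟫ := hkeyF _ _ hxA
      simp only [inner_add_right, inner_smul_right, inner_sub_left, inner_add_left,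
        inner_smul_left, _root_.map_add, ContinuousLinearMap.map_add, ContinuousLinearMap.map_smul]
      linear_combination -hAx + k1 - hBy + (starRingEnd ℂ) l * k2
    have hv2 : z.snd ∈ A.adjoint.domain := by
      have h1 : z.snd ∈ S2.domain := by rw [← hSchur]; exact hv1
      rwa [hS2dom] at h1
    -- second: `z.fst ∈ D(A)` via von Neumann
    have hu : ∃ hu : z.fst ∈ A.domain, A ⟨z.fst, hu⟩ = -w.snd - B ⟨z.snd, hAB hv2⟩ := by
      apply aux_mem_graph_of_inner_adjoint A hA hAd
      intro y
      have h2 := hii (y : X) y.2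
      have h3 : ⟪(B ⟨z.snd, hAB hv2⟩ : X), (y : X)⟫ =
          ⟪z.snd, (B ⟨(y : X), hAB y.2⟩ : X)⟫ := hBsym ⟨z.snd, hAB hv2⟩ ⟨(y : X), hAB y.2⟩
      have h4 : ⟪z.fst, (A.adjoint ⟨(y : X), y.2⟩ : X)⟫ =
          ⟪-w.snd - (B ⟨z.snd, hAB hv2⟩ : X), (y : X)⟫ := by
        rw [inner_sub_left, inner_neg_left]
        linear_combination h2 + h3
      have h5 := congrArg (starRingEnd ℂ) h4
      rw [inner_conj_symm, inner_conj_symm] at h5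
      exact h5
    obtain ⟨huA, _⟩ := hu
    exact (hdom z).mpr ⟨huA, hv2⟩
  have le2 : T.adjoint ≤ T := by
    refine ⟨hrev, fun a b hab => ?_⟩
    exact (le1.2 (x := b) (y := a) hab.symm).symm
  exact le_antisymm le2 le1

end MainProof
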